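/- arXiv:0809.5205 — 4 statements merged into one kernel-verified Lean document; each statement's English description precedes it below -/
import Mathlib

section
/- Let k be a field, M a k-vector space, and g : M → M a k-linear automorphism such that every element of M is contained in some finite-dimensional k-subspace W of M with g(W) = W (i.e., the action of g on M is locally finite). If I is a k-subspace of M satisfying I ⊆ g(I), then g(I) = I. -/
/-- If `g` is a locally finite linear automorphism of a `k`-vector space `M`
(every element lies in a finite-dimensional `g`-invariant subspace), then any
subspace `I` with `I ⊆ g(I)` satisfies `g(I) = I`. -/
theorem stmt0 {k M : Type*} [Field k] [AddCommGroup M] [Module k M]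
    (g : M ≃ₗ[k] M)
    (hlf : ∀ m : M, ∃ W : Submodule k M, FiniteDimensional k W ∧ m ∈ W ∧
      W.map (g : M →ₗ[k] M) = W)
    (I : Submodule k M) (hI : I ≤ I.map (g : M →ₗ[k] M)) :
    I.map (g : M →ₗ[k] M) = I := by
  refine le_antisymm ?_ hI
  rintro x ⟨y, hyI, rfl⟩
  obtain ⟨W, hWfd, hyW, hWinv⟩ := hlf y
  set J := I ⊓ W with hJ
  have hJfd : FiniteDimensional k J := Submodule.finiteDimensional_of_le inf_le_right
  -- J ≤ g(J)
  have hle : J ≤ J.map (g : M →ₗ[k] M) := by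
    rintro z ⟨hzI, hzW⟩
    obtain ⟨w, hwI, hw⟩ := hI hzI
    refine ⟨w, ⟨hwI, ?_⟩, hw⟩
    have : z ∈ W.map (g : M →ₗ[k] M) := hWinv.symm ▸ hzW
    obtain ⟨u, huW, hu⟩ := this
    have : u = w := g.injective (hu.trans hw.symm)
    exact this ▸ huW
  have hfdmap : FiniteDimensional k (J.map (g : M →ₗ[k] M)) :=
    Module.Finite.map _ _
  have heq : J.map (g : M →ₗ[k] M) = J := by
    have := Submodule.finrank_map_le (g : M →ₗ[k] M) J
    exact (Submodule.eq_of_le_of_finrank_le hle this).symm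
  have hgy : g y ∈ J.map (g : M →ₗ[k] M) := ⟨y, ⟨hyI, hyW⟩, rfl⟩
  exact (heq ▸ hgy).1
end

section
/- Let G be a group acting by ring automorphisms on a (possibly noncommutative) ring R, and let N be a normal subgroup of G of finite index. Then every G-prime two-sided ideal J of R is of the form J = I:G = ⋂_{g∈G} g·I for some N-prime two-sided ideal I of R containing J. -/
section Defs

variable {G R : Type*} [Group G] [Ring R] [MulSemiringAction G R]

/-- The image `g·I` of a two-sided ideal `I` under the ring automorphism `x ↦ g • x`;
as a set it is `{g • x : x ∈ I}`, realised as the preimage under `x ↦ g⁻¹ • x`. -/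
def idealSMul (g : G) (I : TwoSidedIdeal R) : TwoSidedIdeal R :=
  TwoSidedIdeal.comap (MulSemiringAction.toRingHom G R g⁻¹) I

/-- A two-sided ideal is `H`-stable if `h·I = I` for all `h ∈ H`. -/
def IsStableUnder (H : Subgroup G) (I : TwoSidedIdeal R) : Prop :=
  ∀ h ∈ H, idealSMul h I = I

/-- A two-sided ideal `I` is `H`-prime if it is `H`-stable, proper, and for all
`H`-stable two-sided ideals `A`, `B`, `A·B ⊆ I` implies `A ⊆ I` or `B ⊆ I`. -/
def IsHPrime (H : Subgroup G) (I : TwoSidedIdeal R) : Prop :=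
  IsStableUnder H I ∧ I ≠ ⊤ ∧
    ∀ A B : TwoSidedIdeal R, IsStableUnder H A → IsStableUnder H B →
      (∀ a ∈ A, ∀ b ∈ B, a * b ∈ I) → A ≤ I ∨ B ≤ I

end Defs

section Aux

variable {G R : Type*} [Group G] [Ring R] [MulSemiringAction G R]

lemma mem_idealSMul {g : G} {I : TwoSidedIdeal R} {x : R} :
    x ∈ idealSMul g I ↔ g⁻¹ • x ∈ I := TwoSidedIdeal.mem_comap _

lemma idealSMul_idealSMul (g h : G) (I : TwoSidedIdeal R) :
    idealSMul g (idealSMul h I) = idealSMul (g * h) I := by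
  refine TwoSidedIdeal.ext fun x => ?_
  simp [mem_idealSMul, mul_smul, mul_inv_rev]

lemma idealSMul_one (I : TwoSidedIdeal R) : idealSMul (1 : G) I = I := by
  refine TwoSidedIdeal.ext fun x => ?_
  simp [mem_idealSMul]

lemma idealSMul_mono {g : G} {I J : TwoSidedIdeal R} (h : I ≤ J) :
    idealSMul g I ≤ idealSMul g J := by
  intro x hx
  exact mem_idealSMul.2 (h (mem_idealSMul.1 hx))

lemma idealSMul_le_iff {g : G} {I J : TwoSidedIdeal R} :
    idealSMul g I ≤ idealSMul g J ↔ I ≤ J := by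
  refine ⟨fun h x hx => ?_, fun h => idealSMul_mono h⟩
  have : g • x ∈ idealSMul g I := by
    rw [mem_idealSMul, inv_smul_smul]; exact hx
  simpa [mem_idealSMul, inv_smul_smul] using h this

lemma idealSMul_iInf {ι : Type*} (g : G) (f : ι → TwoSidedIdeal R) :
    idealSMul g (⨅ i, f i) = ⨅ i, idealSMul g (f i) := by
  refine TwoSidedIdeal.ext fun x => ?_
  simp [mem_idealSMul, TwoSidedIdeal.mem_iInf]

/-- The intersection `I : G = ⨅ g, g • I` reindexed over `G ⧸ N` when `I` is `N`-stable. -/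
lemma iInf_idealSMul_eq_quot (N : Subgroup G) [N.Normal] {I : TwoSidedIdeal R}
    (hI : IsStableUnder N I) :
    (⨅ g : G, idealSMul g I) = ⨅ q : G ⧸ N, idealSMul (Quotient.out q) I := by
  refine le_antisymm (le_iInf fun q => iInf_le _ _) (le_iInf fun g => ?_)
  have h1 : (g⁻¹ * Quotient.out ((g : G ⧸ N)) : G) ∈ N := by
    rw [← QuotientGroup.eq]
    exact (Quotient.out_eq (g : G ⧸ N)).symm
  calc (⨅ q : G ⧸ N, idealSMul (Quotient.out q) I)
      ≤ idealSMul (Quotient.out ((g : G ⧸ N))) I := iInf_le _ _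
    _ = idealSMul g I := by
        have : idealSMul (g⁻¹ * Quotient.out ((g : G ⧸ N))) I = I := hI _ h1
        calc idealSMul (Quotient.out ((g : G ⧸ N))) I
            = idealSMul (g * (g⁻¹ * Quotient.out ((g : G ⧸ N)))) I := by
              rw [mul_inv_cancel_left]
          _ = idealSMul g (idealSMul (g⁻¹ * Quotient.out ((g : G ⧸ N))) I) := by
              rw [idealSMul_idealSMul]
          _ = idealSMul g I := by rw [this]

lemma isStableUnder_iInf_smul (I : TwoSidedIdeal R) :
    IsStableUnder (⊤ : Subgroup G) (⨅ g : G, idealSMul g I) := by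
  intro h _
  rw [idealSMul_iInf]
  refine le_antisymm (le_iInf fun g => ?_) (le_iInf fun g => ?_)
  · calc (⨅ g : G, idealSMul h (idealSMul g I)) ≤ idealSMul h (idealSMul (h⁻¹ * g) I) :=
        iInf_le _ _
      _ = idealSMul g I := by rw [idealSMul_idealSMul, mul_inv_cancel_left]
  · calc (⨅ g : G, idealSMul g I) ≤ idealSMul (h * g) I := iInf_le _ _
      _ = idealSMul h (idealSMul g I) := (idealSMul_idealSMul h g I).symm

lemma isStableUnder_sup {H : Subgroup G} {A B : TwoSidedIdeal R}
    (hA : IsStableUnder H A) (hB : IsStableUnder H B) : IsStableUnder H (A ⊔ B) := by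
  have key : ∀ h ∈ H, A ⊔ B ≤ idealSMul h (A ⊔ B) := by
    intro h hh
    refine sup_le ?_ ?_
    · exact le_trans (le_of_eq (hA h hh).symm) (idealSMul_mono le_sup_left)
    · exact le_trans (le_of_eq (hB h hh).symm) (idealSMul_mono le_sup_right)
  intro h hh
  refine le_antisymm ?_ (key h hh)
  have := idealSMul_mono (g := h) (key h⁻¹ (inv_mem hh))
  rwa [idealSMul_idealSMul, mul_inv_cancel, idealSMul_one] at this

end Aux

/-- For `N` a normal subgroup of finite index in `G`, every `G`-prime two-sided ideal `J`
of `R` has the form `J = I:G = ⋂_{g∈G} g·I` for some `N`-prime two-sided ideal `I ⊇ J`. -/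
theorem stmt5 {G R : Type*} [Group G] [Ring R] [MulSemiringAction G R]
    (N : Subgroup G) [N.Normal] [N.FiniteIndex]
    (J : TwoSidedIdeal R) (hJ : IsHPrime (⊤ : Subgroup G) J) :
    ∃ I : TwoSidedIdeal R, IsHPrime N I ∧ J ≤ I ∧ (⨅ g : G, idealSMul g I) = J := by
  classical
  obtain ⟨hJstab, hJtop, hJprime⟩ := hJ
  -- the poset for Zorn's lemma
  set S : Set (TwoSidedIdeal R) :=
    {I | IsStableUnder N I ∧ J ≤ I ∧ (⨅ g : G, idealSMul g I) ≤ J} with hS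
  have hJS : J ∈ S := by
    refine ⟨fun h _ => hJstab h trivial, le_rfl, ?_⟩
    calc (⨅ g : G, idealSMul g J) ≤ idealSMul 1 J := iInf_le _ _
      _ = J := idealSMul_one J
  -- key fact : for I ∈ S, J ≤ ⨅ g, idealSMul g I, hence equality
  have hinf_eq : ∀ I ∈ S, (⨅ g : G, idealSMul g I) = J := by
    rintro I ⟨hIstab, hJI, hle⟩
    refine le_antisymm hle (le_iInf fun g => ?_)
    rw [← hJstab g trivial]
    exact idealSMul_mono hJI
  -- Zorn's lemma
  obtain ⟨I, hJI', hImax⟩ : ∃ m, J ≤ m ∧ Maximal (· ∈ S) m := by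
    refine zorn_le_nonempty₀ S ?_ J hJS
    intro c hcS hc I₀ hI₀c
    -- upper bound : the union ideal
    have hdir : ∀ x y, x ∈ c → y ∈ c → ∃ z ∈ c, x ≤ z ∧ y ≤ z := fun x y hx hy => by
      rcases hc.total hx hy with h | h
      exacts [⟨y, hy, h, le_rfl⟩, ⟨x, hx, le_rfl, h⟩]
    set U : TwoSidedIdeal R := TwoSidedIdeal.mk' (⋃ I ∈ c, (I : Set R))
      (Set.mem_iUnion₂.2 ⟨I₀, hI₀c, I₀.zero_mem⟩)
      (by
        rintro x y hx hy
        obtain ⟨Ix, hIx, hxI⟩ := Set.mem_iUnion₂.1 hx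
        obtain ⟨Iy, hIy, hyI⟩ := Set.mem_iUnion₂.1 hy
        obtain ⟨Iz, hIz, h1, h2⟩ := hdir Ix Iy hIx hIy
        exact Set.mem_iUnion₂.2 ⟨Iz, hIz, Iz.add_mem (h1 hxI) (h2 hyI)⟩)
      (by
        rintro x hx
        obtain ⟨Ix, hIx, hxI⟩ := Set.mem_iUnion₂.1 hx
        exact Set.mem_iUnion₂.2 ⟨Ix, hIx, Ix.neg_mem hxI⟩)
      (by
        rintro x y hy
        obtain ⟨Iy, hIy, hyI⟩ := Set.mem_iUnion₂.1 hy
        exact Set.mem_iUnion₂.2 ⟨Iy, hIy, Iy.mul_mem_left _ _ hyI⟩)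
      (by
        rintro x y hx
        obtain ⟨Ix, hIx, hxI⟩ := Set.mem_iUnion₂.1 hx
        exact Set.mem_iUnion₂.2 ⟨Ix, hIx, Ix.mul_mem_right _ _ hxI⟩) with hU
    have hmemU : ∀ x : R, x ∈ U ↔ ∃ I ∈ c, x ∈ I := by
      intro x
      rw [hU, TwoSidedIdeal.mem_mk']
      simp [Set.mem_iUnion₂]
    have hleU : ∀ I ∈ c, I ≤ U := fun I hI x hx => (hmemU x).2 ⟨I, hI, hx⟩
    refine ⟨U, ⟨?_, ?_, ?_⟩, hleU⟩
    · -- U is N-stable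
      intro h hh
      refine TwoSidedIdeal.ext fun x => ?_
      rw [mem_idealSMul, hmemU, hmemU]
      constructor
      · rintro ⟨I, hI, hxI⟩
        refine ⟨I, hI, ?_⟩
        have := (hcS hI).1 h hh
        rw [← this, mem_idealSMul]
        exact hxI
      · rintro ⟨I, hI, hxI⟩
        refine ⟨I, hI, ?_⟩
        have := (hcS hI).1 h hh
        rw [← this, mem_idealSMul] at hxI
        exact hxI
    · exact le_trans (hcS hI₀c).2.1 (hleU I₀ hI₀c)
    · -- ⨅ g, g • U ≤ J, via finiteness of G ⧸ N
      have hUstab : IsStableUnder N U := by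
        intro h hh
        refine TwoSidedIdeal.ext fun x => ?_
        rw [mem_idealSMul, hmemU, hmemU]
        constructor
        · rintro ⟨I, hI, hxI⟩
          exact ⟨I, hI, by rw [← (hcS hI).1 h hh, mem_idealSMul]; exact hxI⟩
        · rintro ⟨I, hI, hxI⟩
          exact ⟨I, hI, by rw [← (hcS hI).1 h hh, mem_idealSMul] at hxI; exact hxI⟩
      rw [iInf_idealSMul_eq_quot N hUstab]
      intro x hx
      rw [TwoSidedIdeal.mem_iInf] at hx
      -- for each coset pick a member of the chain
      have hex : ∀ q : G ⧸ N, ∃ I ∈ c, x ∈ idealSMul (Quotient.out q) I := by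
        intro q
        have := hx q
        rw [mem_idealSMul, hmemU] at this
        obtain ⟨I, hI, hxI⟩ := this
        exact ⟨I, hI, mem_idealSMul.2 hxI⟩
      choose f hfc hfx using hex
      -- find a common upper bound in the chain for the finitely many f q
      have : ∃ I ∈ c, ∀ q : G ⧸ N, f q ≤ I := by
        have hfin : (Set.range f).Finite := Set.finite_range f
        obtain ⟨I, ⟨q₀, rfl⟩, hmax⟩ :=
          hfin.exists_maximalFor id (Set.range f) ⟨f (1 : G ⧸ N), Set.mem_range_self _⟩
        refine ⟨f q₀, hfc q₀, fun q => ?_⟩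
        rcases hc.total (hfc q) (hfc q₀) with h | h
        · exact h
        · exact hmax (Set.mem_range_self _) h
      obtain ⟨I, hIc, hfI⟩ := this
      have hxI : x ∈ ⨅ g : G, idealSMul g I := by
        rw [iInf_idealSMul_eq_quot N (hcS hIc).1, TwoSidedIdeal.mem_iInf]
        intro q
        exact idealSMul_mono (hfI q) (hfx q)
      exact (hcS hIc).2.2 hxI
  obtain ⟨⟨hIstab, hJI, hIinf⟩, hImax'⟩ := hImax
  have hIeq : (⨅ g : G, idealSMul g I) = J := hinf_eq I ⟨hIstab, hJI, hIinf⟩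
  refine ⟨I, ⟨hIstab, ?_, ?_⟩, hJI, hIeq⟩
  · -- I ≠ ⊤
    rintro rfl
    refine hJtop (top_le_iff.1 ?_)
    rw [← hIeq]
    refine le_iInf fun g => ?_
    intro x _
    exact mem_idealSMul.2 trivial
  · -- N-primality
    intro A B hA hB hAB
    by_contra hcon
    push_neg at hcon
    obtain ⟨hAI, hBI⟩ := hcon
    set A' := A ⊔ I with hA'
    set B' := B ⊔ I with hB'
    have hA'stab : IsStableUnder N A' := isStableUnder_sup hA hIstab
    have hB'stab : IsStableUnder N B' := isStableUnder_sup hB hIstab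
    -- A'·B' ⊆ I pointwise
    have hprod : ∀ a ∈ A', ∀ b ∈ B', a * b ∈ I := by
      intro a ha b hb
      rw [hA', TwoSidedIdeal.mem_sup] at ha
      rw [hB', TwoSidedIdeal.mem_sup] at hb
      obtain ⟨a₁, ha₁, i₁, hi₁, rfl⟩ := ha
      obtain ⟨b₁, hb₁, i₂, hi₂, rfl⟩ := hb
      have h1 : (a₁ + i₁) * (b₁ + i₂) =
          a₁ * b₁ + (a₁ * i₂ + (i₁ * b₁ + i₁ * i₂)) := by noncomm_ring
      rw [h1]
      refine I.add_mem (hAB a₁ ha₁ b₁ hb₁) (I.add_mem (I.mul_mem_left _ _ hi₂)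
        (I.add_mem (I.mul_mem_right _ _ hi₁) (I.mul_mem_left _ _ hi₂)))
    -- the G-cores of A' and B'
    set A'' := ⨅ g : G, idealSMul g A' with hA''
    set B'' := ⨅ g : G, idealSMul g B' with hB''
    have hA''stab : IsStableUnder ⊤ A'' := isStableUnder_iInf_smul A'
    have hB''stab : IsStableUnder ⊤ B'' := isStableUnder_iInf_smul B'
    have hprod'' : ∀ a ∈ A'', ∀ b ∈ B'', a * b ∈ J := by
      intro a ha b hb
      rw [← hIeq, TwoSidedIdeal.mem_iInf]
      intro g
      rw [mem_idealSMul, smul_mul']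
      refine hprod _ ?_ _ ?_
      · have : a ∈ idealSMul g A' := by
          rw [hA'', TwoSidedIdeal.mem_iInf] at ha; exact ha g
        rwa [mem_idealSMul] at this
      · have : b ∈ idealSMul g B' := by
          rw [hB'', TwoSidedIdeal.mem_iInf] at hb; exact hb g
        rwa [mem_idealSMul] at this
    rcases hJprime A'' B'' hA''stab hB''stab hprod'' with h | h
    · -- then A' ∈ S and I ≤ A', so A' = I, contradicting A ⊄ I
      have hA'S : A' ∈ S := ⟨hA'stab, le_trans hJI le_sup_right, by rw [← hA'']; exact h⟩
      have : A' = I := le_antisymm (hImax' hA'S le_sup_right) le_sup_right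
      exact hAI (le_trans le_sup_left this.le)
    · have hB'S : B' ∈ S := ⟨hB'stab, le_trans hJI le_sup_right, by rw [← hB'']; exact h⟩
      have : B' = I := le_antisymm (hImax' hB'S le_sup_right) le_sup_right
      exact hBI (le_trans le_sup_left this.le)
end

section
/- Let φ : U → V be an injective ring homomorphism between (possibly noncommutative) rings such that φ is centralizing, i.e., V is generated as a ring by the image φ(U) together with the centralizer C_V(φ(U)) = {v ∈ V : v·φ(u) = φ(u)·v for all u ∈ U}. Assume V is a prime ring (the product of any two nonzero two-sided ideals of V is nonzero). Then for every nonzero two-sided ideal I of U, the image φ(I) has zero left and right annihilator in V: if v ∈ V satisfies v·φ(a) = 0 for all a ∈ I, then v = 0, and likewise if φ(a)·v = 0 for all a ∈ I, then v = 0. -/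
/-- If `φ : U → V` is an injective centralizing ring homomorphism (i.e. `V` is generated
as a ring by `φ(U)` together with its centralizer) and `V` is a prime ring, then for every
nonzero two-sided ideal `I` of `U` the image `φ(I)` has zero left and right annihilator
in `V`. -/
theorem stmt7 {U V : Type*} [Ring U] [Ring V] (φ : U →+* V)
    (hinj : Function.Injective φ)
    (hcent : Subring.closure (Set.range φ ∪ Set.centralizer (Set.range φ)) = ⊤)
    (hprime : ∀ A B : TwoSidedIdeal V, (∀ a ∈ A, ∀ b ∈ B, a * b = 0) → A = ⊥ ∨ B = ⊥)
    (I : TwoSidedIdeal U) (hI : I ≠ ⊥) :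
    (∀ v : V, (∀ a ∈ I, v * φ a = 0) → v = 0) ∧
      (∀ v : V, (∀ a ∈ I, φ a * v = 0) → v = 0) := by
  classical
  set C : Set V := Set.centralizer (Set.range φ) with hCdef
  set T : Set V := {x : V | ∃ u : U, ∃ c ∈ C, x = φ u * c} with hTdef
  have h1C : (1 : V) ∈ C := fun m _ => by rw [mul_one, one_mul]
  -- the additive closure of T is a subring
  have hmulT : ∀ a ∈ AddSubgroup.closure T, ∀ b ∈ AddSubgroup.closure T,
      a * b ∈ AddSubgroup.closure T := by
    intro a ha b hb
    induction ha using AddSubgroup.closure_induction with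
    | mem x hx =>
      induction hb using AddSubgroup.closure_induction with
      | mem y hy =>
        obtain ⟨u, c, hc, rfl⟩ := hx
        obtain ⟨u', c', hc', rfl⟩ := hy
        refine AddSubgroup.subset_closure ⟨u * u', c * c', Set.mul_mem_centralizer hc hc', ?_⟩
        have h : φ u' * c = c * φ u' := hc (φ u') ⟨u', rfl⟩
        rw [map_mul]
        calc φ u * c * (φ u' * c') = φ u * (c * φ u') * c' := by noncomm_ring
          _ = φ u * (φ u' * c) * c' := by rw [h]
          _ = φ u * φ u' * (c * c') := by noncomm_ring
      | zero => simpa using (AddSubgroup.closure T).zero_mem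
      | add y z _ _ hy hz => simpa [mul_add] using add_mem hy hz
      | neg y _ hy => simpa [mul_neg] using neg_mem hy
    | zero => simpa using (AddSubgroup.closure T).zero_mem
    | add y z _ _ hy hz => simpa [add_mul] using add_mem hy hz
    | neg y _ hy => simpa [neg_mul] using neg_mem hy
  let S : Subring V :=
    { carrier := AddSubgroup.closure T
      zero_mem' := (AddSubgroup.closure T).zero_mem
      add_mem' := fun ha hb => add_mem ha hb
      neg_mem' := fun ha => neg_mem ha
      one_mem' := AddSubgroup.subset_closure ⟨1, 1, h1C, by simp⟩
      mul_mem' := fun ha hb => hmulT _ ha _ hb }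
  have hspan : ∀ w : V, w ∈ AddSubgroup.closure T := by
    intro w
    have : Subring.closure (Set.range φ ∪ C) ≤ S := by
      rw [Subring.closure_le]
      rintro x (⟨u, rfl⟩ | hx)
      · exact AddSubgroup.subset_closure ⟨u, 1, h1C, by simp⟩
      · exact AddSubgroup.subset_closure ⟨1, x, hx, by simp⟩
    exact this (hcent ▸ Subring.mem_top w)
  -- a nonzero element of I
  have hI0 : ∃ a₀, a₀ ∈ I ∧ a₀ ≠ 0 := by
    by_contra h
    push_neg at h
    refine hI ?_
    ext x
    simp only [TwoSidedIdeal.mem_bot]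
    exact ⟨fun hx => h x hx, fun hx => hx ▸ I.zero_mem⟩
  obtain ⟨a₀, ha₀, ha₀0⟩ := hI0
  have hφa₀ : φ a₀ ≠ 0 := fun h => ha₀0 (hinj (by simpa using h))
  -- the left annihilator L
  have Lmr : ∀ {x y : V}, (∀ a ∈ I, x * φ a = 0) → ∀ a ∈ I, x * y * φ a = 0 := by
    intro x y hx
    induction hspan y using AddSubgroup.closure_induction with
    | mem z hz =>
      obtain ⟨u, c, hc, rfl⟩ := hz
      intro a ha
      have hca : φ a * c = c * φ a := hc (φ a) ⟨a, rfl⟩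
      calc x * (φ u * c) * φ a = x * φ u * (c * φ a) := by noncomm_ring
        _ = x * φ u * (φ a * c) := by rw [hca]
        _ = x * (φ u * φ a) * c := by noncomm_ring
        _ = x * φ (u * a) * c := by rw [map_mul]
        _ = 0 := by rw [hx _ (I.mul_mem_left u a ha), zero_mul]
    | zero => intro a ha; simp
    | add y z _ _ hy hz => intro a ha; rw [mul_add, add_mul, hy a ha, hz a ha, add_zero]
    | neg y _ hy => intro a ha; rw [mul_neg, neg_mul, hy a ha, neg_zero]
  let L : TwoSidedIdeal V := TwoSidedIdeal.mk' {v | ∀ a ∈ I, v * φ a = 0}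
    (by intro a _; simp)
    (fun hx hy a ha => by rw [add_mul, hx a ha, hy a ha, add_zero])
    (fun hx a ha => by rw [neg_mul, hx a ha, neg_zero])
    (fun {x y} hy a ha => by rw [mul_assoc, hy a ha, mul_zero])
    (fun {x y} hx => Lmr hx)
  have memL : ∀ v : V, v ∈ L ↔ ∀ a ∈ I, v * φ a = 0 := fun v =>
    TwoSidedIdeal.mem_mk' _ _ _ _ _ _ v
  -- the right annihilator R
  have Rml : ∀ {x y : V}, (∀ a ∈ I, φ a * y = 0) → ∀ a ∈ I, φ a * (x * y) = 0 := by
    intro x y hy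
    induction hspan x using AddSubgroup.closure_induction with
    | mem z hz =>
      obtain ⟨u, c, hc, rfl⟩ := hz
      intro a ha
      have hca : φ a * c = c * φ a := hc (φ a) ⟨a, rfl⟩
      have hcu : φ u * c = c * φ u := hc (φ u) ⟨u, rfl⟩
      calc φ a * (φ u * c * y) = φ a * c * (φ u * y) := by rw [hcu]; noncomm_ring
        _ = c * (φ a * φ u * y) := by rw [hca]; noncomm_ring
        _ = c * (φ (a * u) * y) := by rw [map_mul]
        _ = 0 := by rw [hy _ (I.mul_mem_right a u ha), mul_zero]
    | zero => intro a ha; simp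
    | add y z _ _ h1 h2 => intro a ha; rw [add_mul, mul_add, h1 a ha, h2 a ha, add_zero]
    | neg y _ h1 => intro a ha; rw [neg_mul, mul_neg, h1 a ha, neg_zero]
  let R : TwoSidedIdeal V := TwoSidedIdeal.mk' {v | ∀ a ∈ I, φ a * v = 0}
    (by intro a _; simp)
    (fun hx hy a ha => by rw [mul_add, hx a ha, hy a ha, add_zero])
    (fun hx a ha => by rw [mul_neg, hx a ha, neg_zero])
    (fun {x y} hy => Rml hy)
    (fun {x y} hx a ha => by rw [← mul_assoc, hx a ha, zero_mul])
  have memR : ∀ v : V, v ∈ R ↔ ∀ a ∈ I, φ a * v = 0 := fun v =>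
    TwoSidedIdeal.mem_mk' _ _ _ _ _ _ v
  constructor
  · -- left annihilator is zero
    intro v hv
    -- B = right annihilator of L
    let B : TwoSidedIdeal V := TwoSidedIdeal.mk' {w | ∀ x ∈ L, x * w = 0}
      (fun x _ => mul_zero x)
      (fun hw1 hw2 x hx => by rw [mul_add, hw1 x hx, hw2 x hx, add_zero])
      (fun hw x hx => by rw [mul_neg, hw x hx, neg_zero])
      (fun {y w} hw x hx => by rw [← mul_assoc]; exact hw _ (L.mul_mem_right x y hx))
      (fun {w y} hw x hx => by rw [← mul_assoc, hw x hx, zero_mul])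
    have memB : ∀ w : V, w ∈ B ↔ ∀ x ∈ L, x * w = 0 := fun w =>
      TwoSidedIdeal.mem_mk' _ _ _ _ _ _ w
    have hB : φ a₀ ∈ B := (memB _).mpr fun x hx => (memL x).mp hx a₀ ha₀
    rcases hprime L B (fun a ha b hb => (memB b).mp hb a ha) with h | h
    · have : v ∈ L := (memL v).mpr hv
      rw [h] at this
      exact (TwoSidedIdeal.mem_bot (R := V)).mp this
    · exact absurd ((TwoSidedIdeal.mem_bot (R := V)).mp (h ▸ hB)) hφa₀
  · intro v hv
    let A : TwoSidedIdeal V := TwoSidedIdeal.mk' {w | ∀ x ∈ R, w * x = 0}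
      (fun x _ => zero_mul x)
      (fun hw1 hw2 x hx => by rw [add_mul, hw1 x hx, hw2 x hx, add_zero])
      (fun hw x hx => by rw [neg_mul, hw x hx, neg_zero])
      (fun {y w} hw x hx => by rw [mul_assoc, hw x hx, mul_zero])
      (fun {w y} hw x hx => by rw [mul_assoc]; exact hw _ (R.mul_mem_left y x hx))
    have memA : ∀ w : V, w ∈ A ↔ ∀ x ∈ R, w * x = 0 := fun w =>
      TwoSidedIdeal.mem_mk' _ _ _ _ _ _ w
    have hA : φ a₀ ∈ A := (memA _).mpr fun x hx => (memR x).mp hx a₀ ha₀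
    rcases hprime A R (fun a ha b hb => (memA a).mp ha b hb) with h | h
    · exact absurd ((TwoSidedIdeal.mem_bot (R := V)).mp (h ▸ hA)) hφa₀
    · have : v ∈ R := (memR v).mpr hv
      rw [h] at this
      exact (TwoSidedIdeal.mem_bot (R := V)).mp this
end

section
/- Let k be an algebraically closed field and let H be a commutative Hopf algebra over k that is finitely generated as a k-algebra and reduced (has no nonzero nilpotent elements). For each k-algebra homomorphism χ : H → k, let τ_χ : H → H denote the right translation operator, i.e., the composite of the comultiplication Δ : H → H ⊗ H with the map id_H ⊗ χ : H ⊗ H → H ⊗ k ≅ H. If I is an ideal of H with I ≠ H such that τ_χ(I) ⊆ I for every k-algebra homomorphism χ : H → k, then I = 0. (This expresses that the coordinate ring k[G] of an affine algebraic group G over k is G-simple for the right regular action.) -/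
open TensorProduct in
/-- The right translation operator `τ_χ = (id ⊗ χ) ∘ Δ : H → H` attached to a character
`χ : H → k` of a Hopf algebra `H`. -/
noncomputable def rightTranslation {k H : Type*} [CommSemiring k] [CommSemiring H]
    [HopfAlgebra k H] (χ : H →ₐ[k] k) : H →ₗ[k] H :=
  (TensorProduct.rid k H).toLinearMap ∘ₗ
    (TensorProduct.map LinearMap.id χ.toLinearMap) ∘ₗ Coalgebra.comul

namespace Stmt11Aux

open Coalgebra TensorProduct HopfAlgebra
open scoped Coalgebra

section AlgGeo

variable {k H : Type*} [Field k] [IsAlgClosed k] [CommRing H] [Algebra k H]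
  [Algebra.FiniteType k H]

/-- Every maximal ideal of a finite type algebra over an algebraically closed field is the
kernel of a character. -/
lemma exists_char_of_isMaximal (m : Ideal H) (hm : m.IsMaximal) :
    ∃ χ : H →ₐ[k] k, RingHom.ker χ = m := by
  letI : Field (H ⧸ m) := Ideal.Quotient.field m
  have hft : Algebra.FiniteType k (H ⧸ m) :=
    Algebra.FiniteType.of_surjective (Ideal.Quotient.mkₐ k m)
      (Ideal.Quotient.mkₐ_surjective k m)
  have hfin : Module.Finite k (H ⧸ m) := finite_of_finite_type_of_isJacobsonRing k _
  have hint : Algebra.IsIntegral k (H ⧸ m) := Algebra.IsIntegral.of_finite k _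
  have hbij : Function.Bijective (algebraMap k (H ⧸ m)) :=
    ⟨(algebraMap k (H ⧸ m)).injective,
      IsAlgClosed.algebraMap_bijective_of_isIntegral.2⟩
  let e : k ≃ₐ[k] (H ⧸ m) := AlgEquiv.ofBijective (Algebra.ofId k (H ⧸ m)) hbij
  refine ⟨(e.symm : (H ⧸ m) →ₐ[k] k).comp (Ideal.Quotient.mkₐ k m), ?_⟩
  ext x
  simp only [RingHom.mem_ker, AlgHom.coe_comp, Function.comp_apply, AlgHom.coe_ringHom_mk]
  constructor
  · intro h
    have : (Ideal.Quotient.mkₐ k m) x = 0 := by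
      have := congrArg e h
      simpa using this
    simpa [Ideal.Quotient.mkₐ_eq_mk, Ideal.Quotient.eq_zero_iff_mem] using this
  · intro h
    have : (Ideal.Quotient.mkₐ k m) x = 0 := by
      simpa [Ideal.Quotient.mkₐ_eq_mk, Ideal.Quotient.eq_zero_iff_mem] using h
    simp [this]

/-- Characters separate points of a reduced finite type algebra over an algebraically closed
field. -/
lemma exists_char_ne_zero [IsReduced H] {y : H} (hy : y ≠ 0) :
    ∃ χ : H →ₐ[k] k, χ y ≠ 0 := by
  have hJ : IsJacobsonRing H := isJacobsonRing_of_finiteType (A := k)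
  have hrad : (⊥ : Ideal H).IsRadical := by
    intro x hx
    have : IsNilpotent x := by
      obtain ⟨n, hn⟩ := hx
      exact ⟨n, by simpa using hn⟩
    simpa using this.eq_zero (R := H)
  have hjac : (⊥ : Ideal H).jacobson = ⊥ := hJ.out' ⊥ hrad
  have hymem : y ∉ (⊥ : Ideal H).jacobson := by
    rw [hjac]; simpa using hy
  rw [Ideal.jacobson, Ideal.mem_sInf] at hymem
  push_neg at hymem
  obtain ⟨m, ⟨-, hmmax⟩, hym⟩ := hymem
  obtain ⟨χ, hχ⟩ := exists_char_of_isMaximal (k := k) m hmmax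
  exact ⟨χ, fun h => hym (hχ ▸ (RingHom.mem_ker (f := (χ : H →+* k))).2 h)⟩

end AlgGeo

section Hopf

variable {k H : Type*} [CommSemiring k] [CommSemiring H] [HopfAlgebra k H]

/-- The left translation operator attached to a linear functional. -/
noncomputable def leftT (φ : H →ₗ[k] k) : H →ₗ[k] H :=
  (TensorProduct.lid k H).toLinearMap ∘ₗ TensorProduct.map φ LinearMap.id ∘ₗ Coalgebra.comul

lemma leftT_repr (φ : H →ₗ[k] k) {x : H} {ι : Type*} (r : Coalgebra.Repr k x ι) :
    leftT φ x = ∑ i ∈ r.index, φ (r.left i) • r.right i := by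
  simp only [leftT, LinearMap.comp_apply, ← r.eq, map_sum, TensorProduct.map_tmul,
    LinearEquiv.coe_coe, TensorProduct.lid_tmul, LinearMap.id_coe, id_eq]

lemma rightTranslation_repr (χ : H →ₐ[k] k) {x : H} {ι : Type*} (r : Coalgebra.Repr k x ι) :
    rightTranslation χ x = ∑ i ∈ r.index, χ (r.right i) • r.left i := by
  simp only [rightTranslation, LinearMap.comp_apply, ← r.eq, map_sum, TensorProduct.map_tmul,
    LinearEquiv.coe_coe, TensorProduct.rid_tmul, LinearMap.id_coe, id_eq,
    AlgHom.toLinearMap_apply]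

lemma char_apply_leftT (χ₀ χ : H →ₐ[k] k) (x : H) :
    χ (leftT χ₀.toLinearMap x) = χ₀ (rightTranslation χ x) := by
  let r := ℛ k x
  rw [leftT_repr _ r, rightTranslation_repr _ r, map_sum, map_sum]
  refine Finset.sum_congr rfl fun i _ => ?_
  simp [Algebra.smul_def, mul_comm]

/-- The left translation by `χ₀ ∘ S` inverts the left translation by `χ₀`. -/
lemma leftT_antipode_leftT (χ₀ : H →ₐ[k] k) (x : H) :
    leftT (χ₀.toLinearMap ∘ₗ HopfAlgebra.antipode k) (leftT χ₀.toLinearMap x) = x := by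
  set φ : H →ₗ[k] k := χ₀.toLinearMap ∘ₗ HopfAlgebra.antipode k with hφ
  let r := ℛ k x
  let a₁ : (i : H × H) → Coalgebra.Repr k (r.left i) (H × H) := fun i => ℛ k (r.left i)
  let a₂ : (i : H × H) → Coalgebra.Repr k (r.right i) (H × H) := fun i => ℛ k (r.right i)
  have hcoassoc := Coalgebra.sum_tmul_tmul_eq r a₁ a₂
  -- apply `F (p ⊗ (q ⊗ s)) = χ₀ p • (φ q • s)` to both sides of coassociativity
  let F : H ⊗[k] (H ⊗[k] H) →ₗ[k] H :=
    (TensorProduct.lid k H).toLinearMap ∘ₗ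
      TensorProduct.map χ₀.toLinearMap
        ((TensorProduct.lid k H).toLinearMap ∘ₗ TensorProduct.map φ LinearMap.id)
  have hF : ∀ p q s : H, F (p ⊗ₜ[k] (q ⊗ₜ[k] s)) = χ₀ p • (φ q • s) := by
    intro p q s
    simp [F]
    try rw [smul_comm]
  have key := congrArg F hcoassoc
  simp only [map_sum, hF] at key
  calc leftT φ (leftT χ₀.toLinearMap x)
      = ∑ i ∈ r.index, χ₀ (r.left i) • leftT φ (r.right i) := by
        rw [leftT_repr _ r, map_sum]
        exact Finset.sum_congr rfl fun i _ => by rw [map_smul]; rfl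
    _ = ∑ i ∈ r.index, ∑ j ∈ (a₂ i).index,
          χ₀ (r.left i) • (φ ((a₂ i).left j) • (a₂ i).right j) := by
        refine Finset.sum_congr rfl fun i _ => ?_
        rw [leftT_repr _ (a₂ i), Finset.smul_sum]
    _ = ∑ i ∈ r.index, ∑ j ∈ (a₁ i).index,
          χ₀ ((a₁ i).left j) • (φ ((a₁ i).right j) • r.right i) := key.symm
    _ = ∑ i ∈ r.index, (∑ j ∈ (a₁ i).index,
          χ₀ ((a₁ i).left j * HopfAlgebra.antipode k ((a₁ i).right j))) • r.right i := by
        refine Finset.sum_congr rfl fun i _ => ?_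
        rw [Finset.sum_smul]
        refine Finset.sum_congr rfl fun j _ => ?_
        rw [smul_smul]
        congr 1
        simp only [map_mul, hφ, LinearMap.coe_comp, Function.comp_apply,
          AlgHom.toLinearMap_apply]
    _ = ∑ i ∈ r.index, Coalgebra.counit (R := k) (r.left i) • r.right i := by
        refine Finset.sum_congr rfl fun i _ => ?_
        rw [← map_sum, HopfAlgebra.sum_mul_antipode_eq_algebraMap_counit (a₁ i)]
        simp
    _ = x := by
        have h2 := congrArg (TensorProduct.lid k H) (Coalgebra.sum_counit_tmul_eq r)
        simp only [map_sum, TensorProduct.lid_tmul, one_smul] at h2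
        exact h2

end Hopf

end Stmt11Aux

open Stmt11Aux in
/-- A reduced affine commutative Hopf algebra `H` over an algebraically closed field `k`
(i.e. the coordinate ring of an affine algebraic group) has no proper nonzero ideal stable
under all right translations `τ_χ`, `χ : H → k` a `k`-algebra homomorphism. -/
theorem stmt11 {k H : Type*} [Field k] [IsAlgClosed k] [CommRing H] [HopfAlgebra k H]
    [Algebra.FiniteType k H] [IsReduced H]
    (I : Ideal H) (hI : I ≠ ⊤)
    (hstab : ∀ χ : H →ₐ[k] k, ∀ x ∈ I, rightTranslation χ x ∈ I) :
    I = ⊥ := by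
  refine (Submodule.eq_bot_iff I).mpr fun x hx => ?_
  obtain ⟨m, hmmax, hIm⟩ := Ideal.exists_le_maximal I hI
  obtain ⟨χ₀, hχ₀⟩ := exists_char_of_isMaximal (k := k) m hmmax
  have hy : leftT χ₀.toLinearMap x = 0 := by
    by_contra hne
    obtain ⟨χ, hχ⟩ := exists_char_ne_zero (k := k) hne
    apply hχ
    rw [char_apply_leftT]
    have : rightTranslation χ x ∈ m := hIm (hstab χ x hx)
    rw [← hχ₀] at this
    exact this
  have := leftT_antipode_leftT χ₀ x
  rw [hy, map_zero] at this
  exact this.symm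
end
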